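/- Let $\mathsf{C}$ be a positive-definite $d\times d$ matrix, $L>0$, $\mu = \mathcal{N}(0, \mathsf{C}(I_d + L\mathsf{C})^{-1})$, and $\pi(dx)\propto\mathcal{N}(dx;0,\mathsf{C})\exp(-\Psi(x))$ with $\Psi$ convex, $L$-smooth and minimized at $0$ with $\Psi(0)=0$. Then $\frac{d\mu}{d\pi}(x)\le\det(I_d+L\mathsf{C})^{1/2}\le\exp(\frac{1}{2}L\,\mathrm{Tr}(\mathsf{C}))$ for all $x$. -/

import Mathlib

/-! Since the precision matrix of `𝒩(0, C(1 + LC)⁻¹)` is `C⁻¹ + L`, its density is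
`det(1 + LC)^{1/2} 𝒩(x; 0, C) exp(-L|x|²/2)`. The gradient of `Ψ` vanishes at its
minimiser `0`, so `L`-smoothness gives `0 ≤ Ψ(x) ≤ L|x|²/2`. Hence the normalising constant
`Z` of `π` is at most `1` and `exp(-L|x|²/2) ≤ exp(-Ψ(x))`, which bounds `dμ/dπ` by
`det(1 + LC)^{1/2}`. Finally `det M ≤ exp(Tr M - d)` for positive semidefinite `M`, because
`λ ≤ exp(λ - 1)`. -/

open MeasureTheory Real
open scoped ENNReal RealInnerProductSpace

noncomputable section

abbrev Evec (d : ℕ) := EuclideanSpace ℝ (Fin d)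

/-- The density of the Gaussian `𝒩(m, C)` with covariance matrix `C` at `x`. -/
def gaussDensityC {d : ℕ} (C : Matrix (Fin d) (Fin d) ℝ) (m x : Evec d) : ℝ :=
  (2 * π) ^ (-(d : ℝ) / 2) * C.det ^ (-(1 : ℝ) / 2) *
    Real.exp (-⟪x - m, Matrix.toEuclideanLin C⁻¹ (x - m)⟫ / 2)

lemma OrthonormalBasis.measurePreserving_ofLp_repr {ι E : Type*} [Fintype ι]
    [NormedAddCommGroup E] [InnerProductSpace ℝ E] [FiniteDimensional ℝ E]
    [MeasurableSpace E] [BorelSpace E]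
    (b : OrthonormalBasis ι ℝ E) :
    MeasurePreserving (b.repr.toHomeomorph.toMeasurableEquiv.trans
      (MeasurableEquiv.toLp 2 (ι → ℝ)).symm) :=
  (PiLp.volume_preserving_ofLp ι).comp b.measurePreserving_repr

section Eigen

variable {ι : Type*} [Fintype ι] [DecidableEq ι] {A : Matrix ι ι ℝ}

lemma Matrix.IsHermitian.inner_toEuclideanLin_self (hA : A.IsHermitian)
    (x : EuclideanSpace ℝ ι) :
    ⟪x, A.toEuclideanLin x⟫ = ∑ i, hA.eigenvalues i * hA.eigenvectorBasis.repr x i ^ 2 := by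
  set b := hA.eigenvectorBasis
  have hb : ∀ i, A.toEuclideanLin (b i) = hA.eigenvalues i • b i := fun i => by
    ext j
    simpa [toLpLin_apply] using congrFun (hA.mulVec_eigenvectorBasis i) j
  nth_rw 2 [← b.sum_repr x]
  simp only [map_sum, map_smul, hb, smul_smul, inner_sum, real_inner_smul_right]
  refine Finset.sum_congr rfl fun i _ => ?_
  rw [real_inner_comm, ← b.repr_apply_apply]
  ring

lemma Matrix.IsHermitian.exp_neg_inner_toEuclideanLin_self (hA : A.IsHermitian)
    (x : EuclideanSpace ℝ ι) :
    Real.exp (-⟪x, A.toEuclideanLin x⟫ / 2) =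
      ∏ i, Real.exp
        (-(hA.eigenvalues i / 2) * WithLp.ofLp (hA.eigenvectorBasis.repr x) i ^ 2) := by
  rw [← Real.exp_sum, hA.inner_toEuclideanLin_self, neg_div, Finset.sum_div,
    ← Finset.sum_neg_distrib]
  congr 1
  refine Finset.sum_congr rfl fun i _ => ?_
  ring

lemma Matrix.PosDef.integrable_exp_neg_inner_toEuclideanLin_self (hA : A.PosDef) :
    Integrable fun x : EuclideanSpace ℝ ι => Real.exp (-⟪x, A.toEuclideanLin x⟫ / 2) := by
  simp_rw [hA.isHermitian.exp_neg_inner_toEuclideanLin_self]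
  have hmp := hA.isHermitian.eigenvectorBasis.measurePreserving_ofLp_repr
  refine (hmp.integrable_comp_emb (MeasurableEquiv.measurableEmbedding _)
    (g := fun v => ∏ i, Real.exp (-(hA.isHermitian.eigenvalues i / 2) * v i ^ 2))).mpr ?_
  exact Integrable.fintype_prod fun i =>
    integrable_exp_neg_mul_sq (half_pos (hA.eigenvalues_pos i))

lemma Matrix.PosDef.integral_exp_neg_inner_toEuclideanLin_self (hA : A.PosDef) :
    ∫ x : EuclideanSpace ℝ ι, Real.exp (-⟪x, A.toEuclideanLin x⟫ / 2) =
      (2 * π) ^ ((Fintype.card ι : ℝ) / 2) * A.det ^ (-(1 : ℝ) / 2) := by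
  simp_rw [hA.isHermitian.exp_neg_inner_toEuclideanLin_self]
  have hmp := hA.isHermitian.eigenvectorBasis.measurePreserving_ofLp_repr
  refine (hmp.integral_comp'
    (g := fun v => ∏ i, Real.exp (-(hA.isHermitian.eigenvalues i / 2) * v i ^ 2))).trans ?_
  rw [volume_pi, integral_fintype_prod_eq_prod
    (f := fun i t => Real.exp (-(hA.isHermitian.eigenvalues i / 2) * t ^ 2))]
  have hpos := hA.eigenvalues_pos
  have h1d : ∀ i, ∫ t, Real.exp (-(hA.isHermitian.eigenvalues i / 2) * t ^ 2) =
      (2 * π) ^ ((1 : ℝ) / 2) * hA.isHermitian.eigenvalues i ^ (-(1 : ℝ) / 2) := fun i => by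
    rw [integral_gaussian, show π / (hA.isHermitian.eigenvalues i / 2) =
      2 * π * (hA.isHermitian.eigenvalues i)⁻¹ by ring, sqrt_eq_rpow,
      mul_rpow (by positivity) (inv_nonneg.mpr (hpos i).le), inv_rpow (hpos i).le,
      ← rpow_neg (hpos i).le, neg_div]
  have hdet : A.det = ∏ i, hA.isHermitian.eigenvalues i := by
    simpa using hA.isHermitian.det_eq_prod_eigenvalues
  simp_rw [h1d]
  rw [Finset.prod_mul_distrib, Finset.prod_const, Finset.card_univ,
    finsetProd_rpow _ _ fun i _ => (hpos i).le, ← hdet,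
    ← rpow_mul_natCast (by positivity)]
  ring_nf

lemma Matrix.PosSemidef.det_le_exp_trace_sub_card {M : Matrix ι ι ℝ} (hM : M.PosSemidef) :
    M.det ≤ Real.exp (M.trace - Fintype.card ι) := by
  have hdet : M.det = ∏ i, hM.isHermitian.eigenvalues i := by
    simpa using hM.isHermitian.det_eq_prod_eigenvalues
  have htr : M.trace = ∑ i, hM.isHermitian.eigenvalues i := by
    simpa using hM.isHermitian.trace_eq_sum_eigenvalues
  calc M.det ≤ ∏ i, Real.exp (hM.isHermitian.eigenvalues i - 1) := by
        rw [hdet]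
        refine Finset.prod_le_prod (fun i _ => hM.eigenvalues_nonneg i) fun i _ => ?_
        linarith [add_one_le_exp (hM.isHermitian.eigenvalues i - 1)]
    _ = Real.exp (M.trace - Fintype.card ι) := by
        rw [← Real.exp_sum, Finset.sum_sub_distrib, htr]
        simp

lemma Matrix.PosSemidef.det_one_add_le_exp_trace (hA : A.PosSemidef) :
    (1 + A).det ≤ Real.exp A.trace := by
  simpa [trace_add] using (PosSemidef.one.add hA).det_le_exp_trace_sub_card

end Eigen

lemma IsLocalMin.apply_add_le_of_smooth {E : Type*} [NormedAddCommGroup E]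
    [InnerProductSpace ℝ E] [CompleteSpace E] {Ψ : E → ℝ} {x₀ : E} {L : ℝ}
    (hmin : IsLocalMin Ψ x₀)
    (hsmooth : ∀ h, Ψ (x₀ + h) - Ψ x₀ - ⟪gradient Ψ x₀, h⟫ ≤ L / 2 * ‖h‖ ^ 2)
    (h : E) :
    Ψ (x₀ + h) ≤ Ψ x₀ + L / 2 * ‖h‖ ^ 2 := by
  have hgrad : gradient Ψ x₀ = 0 := by
    rw [gradient, hmin.fderiv_eq_zero, map_zero]
  linarith [hsmooth h, hgrad ▸ inner_zero_left (𝕜 := ℝ) h]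

section GaussDensity

variable {d : ℕ} {C : Matrix (Fin d) (Fin d) ℝ}

lemma gaussDensityC_pos (hC : 0 < C.det) (m x : Evec d) : 0 < gaussDensityC C m x :=
  mul_pos (mul_pos (rpow_pos_of_pos (by positivity) _) (rpow_pos_of_pos hC _)) (exp_pos _)

lemma integrable_gaussDensityC (hC : C.PosDef) (m : Evec d) :
    Integrable (gaussDensityC C m) :=
  (hC.inv.integrable_exp_neg_inner_toEuclideanLin_self.comp_sub_right m).const_mul _

lemma integral_gaussDensityC (hC : C.PosDef) (m : Evec d) :
    ∫ x, gaussDensityC C m x = 1 := by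
  have hdet := hC.det_pos
  simp only [gaussDensityC]
  rw [integral_const_mul,
    integral_sub_right_eq_self (fun x => Real.exp (-⟪x, C⁻¹.toEuclideanLin x⟫ / 2)),
    hC.inv.integral_exp_neg_inner_toEuclideanLin_self, Matrix.det_nonsing_inv,
    Ring.inverse_eq_inv', inv_rpow hdet.le, Fintype.card_fin, neg_div, neg_div,
    rpow_neg (by positivity), rpow_neg hdet.le, inv_inv]
  field_simp

lemma integral_gaussDensityC_mul_exp_neg_le_one (hC : C.PosDef) (m : Evec d) {Ψ : Evec d → ℝ}
    (hΨ : ∀ x, 0 ≤ Ψ x) : ∫ x, gaussDensityC C m x * Real.exp (-Ψ x) ≤ 1 := by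
  have hρ := gaussDensityC_pos hC.det_pos m
  calc ∫ x, gaussDensityC C m x * Real.exp (-Ψ x) ≤ ∫ x, gaussDensityC C m x :=
        integral_mono_of_nonneg (.of_forall fun x => (mul_pos (hρ x) (exp_pos _)).le)
          (integrable_gaussDensityC hC m) (.of_forall fun x =>
            mul_le_of_le_one_right (hρ x).le (exp_le_one_iff.mpr (neg_nonpos.mpr (hΨ x))))
    _ = 1 := integral_gaussDensityC hC m

lemma gaussDensityC_mul_inv_one_add_smul {L : ℝ} (hC : 0 < C.det) (hM : 0 < (1 + L • C).det)
    (m x : Evec d) :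
    gaussDensityC (C * (1 + L • C)⁻¹) m x =
      (1 + L • C).det ^ ((1 : ℝ) / 2) * gaussDensityC C m x *
        Real.exp (-(L * ‖x - m‖ ^ 2) / 2) := by
  have hprec : (C * (1 + L • C)⁻¹)⁻¹ = C⁻¹ + L • 1 := by
    rw [Matrix.mul_inv_rev, Matrix.nonsing_inv_nonsing_inv _ hM.ne'.isUnit, Matrix.add_mul,
      Matrix.one_mul, Matrix.smul_mul, Matrix.mul_nonsing_inv _ hC.ne'.isUnit]
  have hdet : (C * (1 + L • C)⁻¹).det ^ (-(1 : ℝ) / 2) =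
      C.det ^ (-(1 : ℝ) / 2) * (1 + L • C).det ^ ((1 : ℝ) / 2) := by
    rw [Matrix.det_mul, Matrix.det_nonsing_inv, Ring.inverse_eq_inv',
      mul_rpow hC.le (inv_nonneg.mpr hM.le), inv_rpow hM.le, ← rpow_neg hM.le]
    norm_num
  have hquad : ⟪x - m, (C⁻¹ + L • 1).toEuclideanLin (x - m)⟫ =
      ⟪x - m, C⁻¹.toEuclideanLin (x - m)⟫ + L * ‖x - m‖ ^ 2 := by
    simp [inner_add_right, real_inner_smul_right]
  simp only [gaussDensityC]
  rw [hprec, hdet, hquad, neg_add, add_div, exp_add]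
  ring

end GaussDensity

theorem stmt19_general {d : ℕ} (C : Matrix (Fin d) (Fin d) ℝ) (hC : C.PosDef)
    (L : ℝ) (hL : 0 < L)
    (Ψ : Evec d → ℝ)
    (hsmooth : ∀ x h : Evec d, Ψ (x + h) - Ψ x - ⟪gradient Ψ x, h⟫ ≤ L / 2 * ‖h‖ ^ 2)
    (hmin : ∀ x, Ψ 0 ≤ Ψ x) (hΨ0 : Ψ 0 = 0)
    (Z : ℝ) (hZ : Z = ∫ x, gaussDensityC C 0 x * Real.exp (-Ψ x))
    (x : Evec d) :
    gaussDensityC (C * (1 + L • C)⁻¹) 0 x /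
        (Z⁻¹ * (gaussDensityC C 0 x * Real.exp (-Ψ x))) ≤
      (1 + L • C).det ^ ((1 : ℝ) / 2) ∧
    (1 + L • C).det ^ ((1 : ℝ) / 2) ≤ Real.exp ((1 / 2) * L * C.trace) := by
  have hLC : (L • C).PosDef := hC.smul hL
  have hM : 0 < (1 + L • C).det := (Matrix.PosDef.one.add_posSemidef hLC.posSemidef).det_pos
  have hΨ_le : Ψ x ≤ L / 2 * ‖x‖ ^ 2 := by
    simpa [hΨ0] using (IsLocalMin.apply_add_le_of_smooth (.of_forall hmin) (hsmooth 0) x)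
  have hZ_le : Z ≤ 1 :=
    hZ ▸ integral_gaussDensityC_mul_exp_neg_le_one hC 0 fun y => hΨ0 ▸ hmin y
  set r := Real.exp (-(L * ‖x‖ ^ 2) / 2) / Real.exp (-Ψ x) with hr_def
  have hr : r ≤ 1 := (div_le_one (exp_pos _)).mpr (exp_le_exp.mpr (by linarith))
  constructor
  · calc _ = (1 + L • C).det ^ ((1 : ℝ) / 2) * (Z * r) := by
          have hρ := gaussDensityC_pos hC.det_pos 0 x
          rw [gaussDensityC_mul_inv_one_add_smul hC.det_pos hM, sub_zero, hr_def]
          field_simp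
      _ ≤ (1 + L • C).det ^ ((1 : ℝ) / 2) * 1 := by
          gcongr
          calc Z * r ≤ 1 * r := by gcongr
            _ ≤ 1 := by rwa [one_mul]
      _ = _ := mul_one _
  · calc (1 + L • C).det ^ ((1 : ℝ) / 2) ≤ Real.exp (L * C.trace) ^ ((1 : ℝ) / 2) := by
          gcongr
          simpa [Matrix.trace_smul] using hLC.posSemidef.det_one_add_le_exp_trace
      _ = Real.exp ((1 / 2) * L * C.trace) := by
          rw [← exp_mul]
          ring_nf

/-- The feasible warm start `μ = 𝒩(0, C(I+LC)⁻¹)` for pCN: the density ratio `dμ/dπ`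
with `π ∝ 𝒩(0,C)e^{-Ψ}` is bounded by `det(I+LC)^{1/2} ≤ exp(L·Tr(C)/2)`. -/
theorem stmt19 {d : ℕ} (C : Matrix (Fin d) (Fin d) ℝ) (hC : C.PosDef)
    (L : ℝ) (hL : 0 < L)
    (Ψ : Evec d → ℝ) (hΨconv : ConvexOn ℝ Set.univ Ψ) (hΨdiff : Differentiable ℝ Ψ)
    (hsmooth : ∀ x h : Evec d, Ψ (x + h) - Ψ x - ⟪gradient Ψ x, h⟫ ≤ L / 2 * ‖h‖ ^ 2)
    (hmin : ∀ x, Ψ 0 ≤ Ψ x) (hΨ0 : Ψ 0 = 0)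
    (Z : ℝ) (hZ : Z = ∫ x, gaussDensityC C 0 x * Real.exp (-Ψ x))
    (x : Evec d) :
    gaussDensityC (C * (1 + L • C)⁻¹) 0 x /
        (Z⁻¹ * (gaussDensityC C 0 x * Real.exp (-Ψ x))) ≤
      (1 + L • C).det ^ ((1 : ℝ) / 2) ∧
    (1 + L • C).det ^ ((1 : ℝ) / 2) ≤ Real.exp ((1 / 2) * L * C.trace) :=
  stmt19_general C hC L hL Ψ hsmooth hmin hΨ0 Z hZ x
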